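/- arXiv:1506.07258 — 2 statements merged into one kernel-verified Lean document; each statement's English description precedes it below -/
import Mathlib

section
/- Every independent set U of vertices of G(n,3,1) can be written as a union U = (∪_{i∈I} A_i) ∪ (∪_{j∈J} B_j) ∪ (∪_{k∈K} C_k), where each A_i is a set of vertices of the first type, each B_j is a set of vertices of the second type, each C_k is a set of vertices of the third type, and the supports of all the sets A_i, B_j, C_k are pairwise disjoint. -/
/-- The vertices of `G(n,3,1)`: 3-element subsets of `{1, …, n}`. -/
abbrev Vtx (n : ℕ) := {s : Finset ℕ // s ⊆ Finset.Icc 1 n ∧ s.card = 3}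

/-- The graph `G(n,3,1)`: two 3-element subsets of `{1, …, n}` are adjacent
iff they intersect in exactly one element. -/
def G (n : ℕ) : SimpleGraph (Vtx n) where
  Adj a b := (a.1 ∩ b.1).card = 1
  symm := ⟨fun a b (h : (a.1 ∩ b.1).card = 1) => show (b.1 ∩ a.1).card = 1 by
    rwa [Finset.inter_comm]⟩
  loopless := ⟨fun a (h : (a.1 ∩ a.1).card = 1) => by
    rw [Finset.inter_self, a.2.2] at h; omega⟩

instance (n : ℕ) : DecidableRel (G n).Adj := fun a b =>
  inferInstanceAs (Decidable ((a.1 ∩ b.1).card = 1))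

instance (n : ℕ) : Fintype (Vtx n) :=
  Fintype.subtype ((Finset.Icc 1 n).powerset.filter fun s => s.card = 3) (by
    intro s
    simp [Finset.mem_powerset, and_comm])

instance (n : ℕ) (s : Set (Vtx n)) : DecidableRel ((G n).induce s).Adj := fun a b =>
  inferInstanceAs (Decidable (((a : Vtx n).1 ∩ (b : Vtx n).1).card = 1))

/-- The number of edges of `G(n,3,1)` with both endpoints in `W`. -/
def edgesIn (n : ℕ) (W : Finset (Vtx n)) : ℕ :=
  ((G n).induce (W : Set (Vtx n))).edgeFinset.card

/-- The independence number of `G(n,3,1)`. -/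
noncomputable def alpha (n : ℕ) : ℕ :=
  sSup {k | ∃ W : Finset (Vtx n), W.card = k ∧ ∀ u ∈ W, ∀ v ∈ W, ¬ (G n).Adj u v}

/-- The minimal number of edges induced on a vertex subset of cardinality `l`. -/
noncomputable def rmin (n l : ℕ) : ℕ :=
  sInf {m | ∃ W : Finset (Vtx n), W.card = l ∧ edgesIn n W = m}

/-- The support of a set of vertices: the union of the corresponding
3-element subsets of `{1, …, n}`. -/
def support (n : ℕ) (W : Set (Vtx n)) : Set ℕ := ⋃ w ∈ W, (w.1 : Set ℕ)

/-- `W` is a set of vertices of the first type: `|W| ≥ 3` and there are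
`i, j ∈ {1, …, n}` belonging to every vertex of `W`. -/
def FirstType (n : ℕ) (W : Set (Vtx n)) : Prop :=
  3 ≤ W.ncard ∧ ∃ i ∈ Finset.Icc 1 n, ∃ j ∈ Finset.Icc 1 n,
    ∀ w ∈ W, i ∈ w.1 ∧ j ∈ w.1

/-- `W` is a set of vertices of the second type: `|W| ≥ 2` and there are
`i, j, k, t ∈ {1, …, n}` such that every vertex of `W` is contained in `{i, j, k, t}`. -/
def SecondType (n : ℕ) (W : Set (Vtx n)) : Prop :=
  2 ≤ W.ncard ∧ ∃ i ∈ Finset.Icc 1 n, ∃ j ∈ Finset.Icc 1 n, ∃ k ∈ Finset.Icc 1 n,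
    ∃ t ∈ Finset.Icc 1 n, ∀ w ∈ W, w.1 ⊆ ({i, j, k, t} : Finset ℕ)

/-- `W` is a set of vertices of the third type: any two distinct vertices of `W`
are disjoint as subsets of `{1, …, n}`. -/
def ThirdType (n : ℕ) (W : Set (Vtx n)) : Prop :=
  ∀ w₁ ∈ W, ∀ w₂ ∈ W, w₁ ≠ w₂ → Disjoint w₁.1 w₂.1

/-! In an independent set two distinct triples meet in `0` or `2` points, so "meets" is an
equivalence relation on it: if `u` meets `v` and `v` meets `w`, the pairs `u ∩ v` and `v ∩ w`
lie in the triple `v` and hence share a point of `u ∩ w`. The classes have pairwise disjoint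
supports, and inside a class any two triples share exactly two points. Such a family is a single
triple (third type), or its triples contain a common pair (first type if there are at least three
of them), or they lie in a `4`-set (second type): a triple `w` missing the pair `u ∩ v` meets `u`
and `v` in two points each, at most one of them common, so `w ⊆ u ∪ v`. -/

open Finset

namespace Finset

variable {α : Type*} [DecidableEq α]

theorem subset_union_of_card_inter_eq_two {a b c : Finset α} (hc : #c = 3)
    (hab : #(a ∩ b) ≤ 2) (hac : #(a ∩ c) = 2) (hbc : #(b ∩ c) = 2) (h : ¬ a ∩ b ⊆ c) :
    c ⊆ a ∪ b := by
  have hcommon : #(a ∩ c ∩ (b ∩ c)) < #(a ∩ b) := by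
    refine card_lt_card (ssubset_of_subset_of_ne
      (inter_subset_inter inter_subset_left inter_subset_left) fun he => h ?_)
    exact he ▸ inter_subset_left.trans inter_subset_right
  have hcover : (a ∪ b) ∩ c = c := by
    refine eq_of_subset_of_card_le inter_subset_right ?_
    rw [union_inter_distrib_right]
    have := card_union_add_card_inter (a ∩ c) (b ∩ c)
    omega
  exact inter_eq_right.1 hcover

theorem forall_inter_subset_or_forall_subset_union {F : Set (Finset α)}
    (hF : F.Pairwise fun s t => #(s ∩ t) = 2) (h3 : ∀ s ∈ F, #s = 3)
    {u v : Finset α} (hu : u ∈ F) (hv : v ∈ F) (huv : u ≠ v) :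
    (∀ w ∈ F, u ∩ v ⊆ w) ∨ ∀ w ∈ F, w ⊆ u ∪ v := by
  refine or_iff_not_imp_left.2 fun h => ?_
  push Not at h
  obtain ⟨w₀, hw₀, huvw₀⟩ := h
  have hw₀u : u ≠ w₀ := by rintro rfl; exact huvw₀ inter_subset_left
  have hw₀v : v ≠ w₀ := by rintro rfl; exact huvw₀ inter_subset_right
  have hw₀_sub : w₀ ⊆ u ∪ v := subset_union_of_card_inter_eq_two (h3 w₀ hw₀)
    (hF hu hv huv).le (hF hu hw₀ hw₀u) (hF hv hw₀ hw₀v) huvw₀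
  intro x hx
  rcases eq_or_ne u x with rfl | hux
  · exact subset_union_left
  by_cases hx_pair : u ∩ v ⊆ x
  · have hw₀x : w₀ ≠ x := by rintro rfl; exact huvw₀ hx_pair
    -- `u ∩ v` and `u ∩ w₀` are distinct pairs in `u`, so they cannot both equal `u ∩ x`
    have hx_pair' : ¬ u ∩ w₀ ⊆ x := by
      intro h'
      have e₁ : u ∩ v = u ∩ x := eq_of_subset_of_card_le
        (subset_inter inter_subset_left hx_pair) (by rw [hF hu hv huv, hF hu hx hux])
      have e₂ : u ∩ w₀ = u ∩ x := eq_of_subset_of_card_le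
        (subset_inter inter_subset_left h') (by rw [hF hu hw₀ hw₀u, hF hu hx hux])
      exact huvw₀ ((e₁.trans e₂.symm) ▸ inter_subset_right)
    exact (subset_union_of_card_inter_eq_two (h3 x hx) (hF hu hw₀ hw₀u).le (hF hu hx hux)
      (hF hw₀ hx hw₀x) hx_pair').trans (union_subset subset_union_left hw₀_sub)
  · have hvx : v ≠ x := by rintro rfl; exact hx_pair inter_subset_right
    exact subset_union_of_card_inter_eq_two (h3 x hx) (hF hu hv huv).le (hF hu hx hux)
      (hF hv hx hvx) hx_pair

end Finset

section

variable {n : ℕ}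

theorem secondType_of_subset_union {W : Set (Vtx n)} {u v : Vtx n} (hu : u ∈ W) (hv : v ∈ W)
    (huv : u ≠ v) (hcard : #(u.1 ∩ v.1) = 2) (hW : ∀ w ∈ W, w.1 ⊆ u.1 ∪ v.1) :
    SecondType n W := by
  have h4 : #(u.1 ∪ v.1) = 4 := by
    have := card_union_add_card_inter u.1 v.1
    rw [u.2.2, v.2.2] at this
    omega
  obtain ⟨i, j, k, t, -, -, -, -, -, -, hS⟩ := card_eq_four.1 h4
  have hIcc : u.1 ∪ v.1 ⊆ Icc 1 n := union_subset u.2.1 v.2.1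
  exact ⟨(Set.one_lt_ncard).2 ⟨u, hu, v, hv, huv⟩, i, hIcc (by simp [hS]), j, hIcc (by simp [hS]),
    k, hIcc (by simp [hS]), t, hIcc (by simp [hS]), fun w hw => hS ▸ hW w hw⟩

theorem firstType_or_secondType_or_thirdType {W : Set (Vtx n)}
    (hW : W.Pairwise fun u v => #(u.1 ∩ v.1) = 2) :
    FirstType n W ∨ SecondType n W ∨ ThirdType n W := by
  rcases W.subsingleton_or_nontrivial with hsub | ⟨u, hu, v, hv, huv⟩
  · exact Or.inr (Or.inr fun _ h₁ _ h₂ hne => absurd (hsub h₁ h₂) hne)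
  have hval : (Subtype.val '' W).Pairwise fun s t => #(s ∩ t) = 2 :=
    (Subtype.val_injective.injOn.pairwise_image).2 hW
  have h3 : ∀ s ∈ Subtype.val '' W, #s = 3 := by rintro _ ⟨w, -, rfl⟩; exact w.2.2
  rcases forall_inter_subset_or_forall_subset_union hval h3 ⟨u, hu, rfl⟩ ⟨v, hv, rfl⟩
    (Subtype.val_injective.ne huv) with hpair | hsub
  · by_cases hW3 : 3 ≤ W.ncard
    · obtain ⟨i, j, -, hp⟩ := card_eq_two.1 (hW hu hv huv)
      have hi : i ∈ u.1 ∩ v.1 := by simp [hp]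
      have hj : j ∈ u.1 ∩ v.1 := by simp [hp]
      exact Or.inl ⟨hW3, i, u.2.1 (mem_of_mem_inter_left hi), j, u.2.1 (mem_of_mem_inter_left hj),
        fun w hw => ⟨hpair _ ⟨w, hw, rfl⟩ hi, hpair _ ⟨w, hw, rfl⟩ hj⟩⟩
    · refine Or.inr (Or.inl (secondType_of_subset_union hu hv huv (hW hu hv huv) fun w hw => ?_))
      by_contra hw_sub
      have hwu : u ≠ w := by rintro rfl; exact hw_sub subset_union_left
      have hwv : v ≠ w := by rintro rfl; exact hw_sub subset_union_right
      exact hW3 ((Set.two_lt_ncard).2 ⟨u, hu, v, hv, w, hw, huv, hwu, hwv⟩)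
  · exact Or.inr (Or.inl (secondType_of_subset_union hu hv huv (hW hu hv huv)
      fun w hw => hsub _ ⟨w, hw, rfl⟩))

namespace Vtx

theorem card_inter_eq_two_of_not_adj {u v : Vtx n} (h : ¬ (G n).Adj u v) (huv : u ≠ v)
    (hmeet : ¬ Disjoint u.1 v.1) : #(u.1 ∩ v.1) = 2 := by
  have hne1 : #(u.1 ∩ v.1) ≠ 1 := h
  have hne3 : #(u.1 ∩ v.1) ≠ 3 := fun h3 => huv <| Subtype.ext <|
    (eq_of_subset_of_card_le inter_subset_left (by rw [h3, u.2.2])).symm.trans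
      (eq_of_subset_of_card_le inter_subset_right (by rw [h3, v.2.2]))
  have hle : #(u.1 ∩ v.1) ≤ #u.1 := card_le_card inter_subset_left
  rw [u.2.2] at hle
  have hpos : 0 < #(u.1 ∩ v.1) := card_pos.2 (not_disjoint_iff_nonempty_inter.1 hmeet)
  omega

theorem not_disjoint_trans {U : Set (Vtx n)} (hU : ∀ u ∈ U, ∀ v ∈ U, ¬ (G n).Adj u v)
    {u v w : Vtx n} (hu : u ∈ U) (hv : v ∈ U) (hw : w ∈ U)
    (huv : ¬ Disjoint u.1 v.1) (hvw : ¬ Disjoint v.1 w.1) : ¬ Disjoint u.1 w.1 := by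
  rcases eq_or_ne u v with rfl | huv'
  · exact hvw
  rcases eq_or_ne v w with rfl | hvw'
  · exact huv
  have hcard : #v.1 < #(u.1 ∩ v.1) + #(v.1 ∩ w.1) := by
    rw [v.2.2, card_inter_eq_two_of_not_adj (hU u hu v hv) huv' huv,
      card_inter_eq_two_of_not_adj (hU v hv w hw) hvw' hvw]
    norm_num
  rw [not_disjoint_iff_nonempty_inter]
  exact (inter_nonempty_of_card_lt_card_add_card inter_subset_right inter_subset_left hcard).mono
    (inter_subset_inter inter_subset_left inter_subset_right)

end Vtx

def block (U : Set (Vtx n)) (u : Vtx n) : Set (Vtx n) := {v ∈ U | ¬ Disjoint v.1 u.1}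

variable {U : Set (Vtx n)}

theorem sUnion_image_block : ⋃₀ (block U '' U) = U := by
  refine subset_antisymm (Set.sUnion_subset fun _ ⟨_, _, hW⟩ => hW ▸ fun _ hv => hv.1) ?_
  intro u hu
  have hself : ¬ Disjoint u.1 u.1 := by
    rw [disjoint_self_iff_empty, ← card_eq_zero, u.2.2]
    norm_num
  exact Set.mem_sUnion_of_mem (show u ∈ block U u from ⟨hu, hself⟩) (Set.mem_image_of_mem _ hu)

theorem block_eq_of_not_disjoint (hU : ∀ u ∈ U, ∀ v ∈ U, ¬ (G n).Adj u v) {u u' : Vtx n}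
    (hu : u ∈ U) (hu' : u' ∈ U) (h : ¬ Disjoint u.1 u'.1) : block U u = block U u' := by
  ext v
  refine and_congr_right fun hv => ⟨fun hvu => ?_, fun hvu' => ?_⟩
  · exact Vtx.not_disjoint_trans hU hv hu hu' hvu h
  · exact Vtx.not_disjoint_trans hU hv hu' hu hvu' (fun h' => h h'.symm)

theorem pairwise_card_inter_block (hU : ∀ u ∈ U, ∀ v ∈ U, ¬ (G n).Adj u v) {u : Vtx n}
    (hu : u ∈ U) : (block U u).Pairwise fun v w => #(v.1 ∩ w.1) = 2 :=
  fun v hv w hw hvw => Vtx.card_inter_eq_two_of_not_adj (hU v hv.1 w hw.1) hvw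
    (Vtx.not_disjoint_trans hU hv.1 hu hw.1 hv.2 fun h' => hw.2 h'.symm)

theorem pairwise_disjoint_support_image_block (hU : ∀ u ∈ U, ∀ v ∈ U, ¬ (G n).Adj u v) :
    (block U '' U).Pairwise fun W₁ W₂ => Disjoint (support n W₁) (support n W₂) := by
  rintro _ ⟨u, hu, rfl⟩ _ ⟨u', hu', rfl⟩ hne
  refine Set.disjoint_left.2 fun x hx hx' => hne ?_
  simp only [support, Set.mem_iUnion, mem_coe] at hx hx'
  obtain ⟨v, hv, hxv⟩ := hx
  obtain ⟨w, hw, hxw⟩ := hx'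
  have hvw : ¬ Disjoint v.1 w.1 := not_disjoint_iff.2 ⟨x, hxv, hxw⟩
  have huw : ¬ Disjoint u.1 w.1 :=
    Vtx.not_disjoint_trans hU hu hv.1 hw.1 (fun h' => hv.2 h'.symm) hvw
  exact block_eq_of_not_disjoint hU hu hu'
    (Vtx.not_disjoint_trans hU hu hw.1 hu' huw hw.2)

end

/-- Every independent set `U` of vertices of `G(n,3,1)` can be written as a union of
sets of vertices of the first, second and third types whose supports are pairwise
disjoint. -/
theorem stmt_2 (n : ℕ) (U : Set (Vtx n))
    (hU : ∀ u ∈ U, ∀ v ∈ U, ¬ (G n).Adj u v) :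
    ∃ 𝒜 ℬ 𝒞 : Set (Set (Vtx n)),
      (∀ A ∈ 𝒜, FirstType n A) ∧
      (∀ B ∈ ℬ, SecondType n B) ∧
      (∀ C ∈ 𝒞, ThirdType n C) ∧
      U = (⋃ A ∈ 𝒜, A) ∪ (⋃ B ∈ ℬ, B) ∪ (⋃ C ∈ 𝒞, C) ∧
      (𝒜 ∪ ℬ ∪ 𝒞).Pairwise (fun W₁ W₂ => Disjoint (support n W₁) (support n W₂)) := by
  set 𝒮 := block U '' U
  have htypes : ∀ W ∈ 𝒮, FirstType n W ∨ SecondType n W ∨ ThirdType n W := by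
    rintro _ ⟨u, hu, rfl⟩
    exact firstType_or_secondType_or_thirdType (pairwise_card_inter_block hU hu)
  have hcover : {W ∈ 𝒮 | FirstType n W} ∪ {W ∈ 𝒮 | SecondType n W} ∪
      {W ∈ 𝒮 | ThirdType n W} = 𝒮 := by
    rw [← Set.sep_or, ← Set.sep_or, Set.sep_eq_self_iff_mem_true]
    exact fun W hW => or_assoc.2 (htypes W hW)
  refine ⟨{W ∈ 𝒮 | FirstType n W}, {W ∈ 𝒮 | SecondType n W}, {W ∈ 𝒮 | ThirdType n W},
    fun _ h => h.2, fun _ h => h.2, fun _ h => h.2, ?_, ?_⟩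
  · rw [← Set.biUnion_union, ← Set.biUnion_union, hcover, ← Set.sUnion_eq_biUnion,
      sUnion_image_block]
  · rw [hcover]
    exact pairwise_disjoint_support_image_block hU
end

section
/- For every even natural number s = 2m ≥ 2 and every k with 1 ≤ k ≤ s − 1, there exist k partitions P₁, …, P_k of a set of size s into pairs (perfect matchings of the complete graph on s vertices) that are pairwise disjoint as sets of pairs, i.e. no two-element subset belongs to more than one of the partitions. -/
set_option linter.unusedSectionVars false

namespace Stmt13Aux

variable {n : ℕ} [NeZero n]

/-- partner of `v` in round `t` -/
def pi (t : ZMod n) : Option (ZMod n) → Option (ZMod n)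
  | none => some t
  | some x => if x = t then none else some (2*t - x)

lemma pi_ne (h2 : ∀ x y : ZMod n, 2*x = 2*y → x = y) (t : ZMod n)
    (v : Option (ZMod n)) : pi t v ≠ v := by
  cases v with
  | none => simp [pi]
  | some x =>
      by_cases hx : x = t
      · simp [pi, hx]
      · simp only [pi, hx, if_false, Ne, Option.some.injEq]
        intro h
        exact hx (h2 _ _ (by linear_combination -h))

lemma pi_pi (h2 : ∀ x y : ZMod n, 2*x = 2*y → x = y) (t : ZMod n)
    (v : Option (ZMod n)) : pi t (pi t v) = v := by
  cases v with
  | none => simp [pi]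
  | some x =>
      by_cases hx : x = t
      · simp [pi, hx]
      · have h1 : 2*t - x ≠ t := by
          intro h; apply hx; apply h2; linear_combination -2*h
        simp only [pi, hx, h1, if_false, Option.some.injEq]
        ring

lemma pair_eq (h2 : ∀ x y : ZMod n, 2*x = 2*y → x = y) (t : ZMod n) {v w : Option (ZMod n)}
    (hv : v ∈ ({w, pi t w} : Finset (Option (ZMod n)))) :
    ({v, pi t v} : Finset (Option (ZMod n))) = {w, pi t w} := by
  simp only [Finset.mem_insert, Finset.mem_singleton] at hv
  rcases hv with rfl | rfl
  · rfl
  · rw [pi_pi h2, Finset.pair_comm]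

lemma pi_inj (h2 : ∀ x y : ZMod n, 2*x = 2*y → x = y) (t t' : ZMod n)
    (v : Option (ZMod n)) (h : pi t v = pi t' v) : t = t' := by
  cases v with
  | none => simpa [pi] using h
  | some x =>
      by_cases ha : x = t
      · by_cases hb : x = t'
        · rw [← ha, ← hb]
        · subst ha; simp [pi, hb] at h
      · by_cases hb : x = t'
        · subst hb; simp [pi, ha] at h
        · simp only [pi, ha, hb, if_false, Option.some.injEq] at h
          exact h2 _ _ (by linear_combination h)

end Stmt13Aux

open Stmt13Aux in
/-- For every even `s = 2m ≥ 2` and every `1 ≤ k ≤ s − 1`, any set `A` of size `s`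
admits `k` partitions `P₁, …, P_k` into pairs (perfect matchings of the complete
graph on `A`) that are pairwise disjoint as sets of pairs: no two-element subset
belongs to more than one of the partitions. -/
theorem stmt_13 {α : Type*} [DecidableEq α] (m k : ℕ) (hm : 1 ≤ m) (hk : 1 ≤ k)
    (hks : k ≤ 2 * m - 1) (A : Finset α) (hA : A.card = 2 * m) :
    ∃ P : Fin k → Finset (Finset α),
      (∀ t, ∀ e ∈ P t, e.card = 2) ∧
      (∀ t, ((P t : Set (Finset α))).Pairwise Disjoint) ∧
      (∀ t, (P t).biUnion id = A) ∧
      (∀ t t', t ≠ t' → Disjoint (P t) (P t')) := by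
  set n := 2 * m - 1 with hn
  haveI : NeZero n := ⟨by omega⟩
  have hodd : Nat.Coprime 2 n := by
    rw [Nat.Prime.coprime_iff_not_dvd Nat.prime_two]
    intro ⟨c, hc⟩; omega
  have hu : IsUnit (2 : ZMod n) := by
    have := (ZMod.isUnit_iff_coprime 2 n).mpr hodd
    simpa using this
  have h2 : ∀ x y : ZMod n, 2*x = 2*y → x = y := fun x y h =>
    hu.mul_right_injective h
  have hcard : Fintype.card (Option (ZMod n)) = A.card := by
    simp [hA, ZMod.card, hn]; omega
  let e : Option (ZMod n) ≃ A :=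
    (Fintype.equivFinOfCardEq (hcard.trans hA)).trans (A.equivFinOfCardEq hA).symm
  let g : Option (ZMod n) → α := fun v => (e v : α)
  have hg : Function.Injective g := by
    intro a b h
    exact e.injective (Subtype.ext h)
  have hgA : ∀ v, g v ∈ A := fun v => (e v).2
  let Q : ZMod n → Finset (Finset (Option (ZMod n))) := fun t =>
    Finset.image (fun v => ({v, pi t v} : Finset (Option (ZMod n)))) Finset.univ
  let P : Fin k → Finset (Finset α) := fun t =>
    (Q ((t : ℕ) : ZMod n)).image (Finset.image g)
  refine ⟨P, ?_, ?_, ?_, ?_⟩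
  · intro t e' he'
    simp only [P, Q, Finset.mem_image, Finset.mem_univ, true_and] at he'
    obtain ⟨e'', ⟨v, rfl⟩, rfl⟩ := he'
    rw [Finset.card_image_of_injective _ hg]
    rw [Finset.card_insert_of_notMem (by simp [Ne.symm (pi_ne h2 _ v)]),
      Finset.card_singleton]
  · intro t e1 he1 e2 he2 hne
    simp only [P, Q, Finset.coe_image, Set.mem_image, Finset.mem_coe,
      Finset.mem_image, Finset.mem_univ, true_and] at he1 he2
    obtain ⟨e1', ⟨v, rfl⟩, rfl⟩ := he1
    obtain ⟨e2', ⟨w, rfl⟩, rfl⟩ := he2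
    rw [Finset.disjoint_image hg]
    rw [Finset.disjoint_left]
    intro u hu1 hu2
    exact hne (congrArg _ ((pair_eq h2 _ hu1).symm.trans (pair_eq h2 _ hu2)))
  · intro t
    apply Finset.Subset.antisymm
    · intro a ha
      simp only [P, Q, Finset.mem_biUnion, Finset.mem_image, Finset.mem_univ,
        true_and, id] at ha
      obtain ⟨e', ⟨e'', ⟨v, rfl⟩, rfl⟩, ha⟩ := ha
      simp only [Finset.mem_image] at ha
      obtain ⟨w, _, rfl⟩ := ha
      exact hgA w
    · intro a ha
      have : a = g (e.symm ⟨a, ha⟩) := by simp [g]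
      rw [this]
      simp only [P, Q, Finset.mem_biUnion, id]
      refine ⟨Finset.image g {e.symm ⟨a, ha⟩, pi (((t : ℕ) : ZMod n)) (e.symm ⟨a, ha⟩)}, ?_, ?_⟩
      · exact Finset.mem_image_of_mem _ (Finset.mem_image_of_mem _ (Finset.mem_univ _))
      · exact Finset.mem_image_of_mem _ (Finset.mem_insert_self _ _)
  · intro t t' htt'
    rw [Finset.disjoint_left]
    intro e1 he1 he2
    simp only [P, Q, Finset.mem_image, Finset.mem_univ, true_and] at he1 he2
    obtain ⟨e1', ⟨v, rfl⟩, rfl⟩ := he1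
    obtain ⟨e2', ⟨w, hew⟩, himg⟩ := he2
    have hee : ({v, pi ((t:ℕ):ZMod n) v} : Finset (Option (ZMod n))) = e2' :=
      Finset.image_injective hg himg.symm
    subst hew
    have hv : v ∈ ({w, pi ((t':ℕ):ZMod n) w} : Finset (Option (ZMod n))) := by
      rw [← hee]; exact Finset.mem_insert_self _ _
    have heq := (pair_eq h2 _ hv).trans hee.symm
    have hmem : pi ((t:ℕ):ZMod n) v ∈ ({v, pi ((t':ℕ):ZMod n) v} : Finset (Option (ZMod n))) := by
      rw [heq]; exact Finset.mem_insert_of_mem (Finset.mem_singleton_self _)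
    simp only [Finset.mem_insert, Finset.mem_singleton] at hmem
    rcases hmem with h | h
    · exact pi_ne h2 _ v h
    · have : ((t:ℕ) : ZMod n) = ((t':ℕ) : ZMod n) := pi_inj h2 _ _ v h
      apply htt'
      have ht := ZMod.val_cast_of_lt (show (t:ℕ) < n by omega)
      have ht' := ZMod.val_cast_of_lt (show (t':ℕ) < n by omega)
      apply Fin.ext
      rw [← ht, ← ht', this]
end
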